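/- Let r ∈ ℤ_{≥0}, α_0 ∈ ℂ, λ_0, α_1 ∈ ℂ*, and let V be an infinite-dimensional irreducible L̄_r-module. For s ∈ ℤ_{≥0} let W_s ⊆ ℂ[X_0,X_1] be the subspace spanned by { f(X_0)(X_0+X_1)^n : n ∈ ℤ_{≥0}, f ∈ ℂ[X_0], deg f ≤ s }. Then V ⊗ W_0 ⊂ V ⊗ W_1 ⊂ ⋯ ⊂ V ⊗ W_s ⊂ ⋯ is a chain of submodules of M(V,Ω(λ_0,α_0)) ⊗ Ω(λ_0,α_1), and for each s ≥ 1 the quotient (V ⊗ W_s)/(V ⊗ W_{s−1}), equipped with the operators induced by the L_k, is isomorphic as a Virasoro module to M(V,Ω(λ_0, s+α_0+α_1)): there is a linear bijection from the quotient onto V ⊗ ℂ[X] commuting with the respective operators L_k for all k ∈ ℤ. -/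

import Mathlib

/-!
In the coordinates `Y = X₀`, `Z = X₀ + X₁` we have `ℂ[X₀, X₁] = ℂ[Z][Y]`, and `W_s` is the space
of polynomials of `Y`-degree at most `s`. Since `X₁ = Z - Y`, the operator `L_k` sends
`v ⊗ f(Y) q(Z)` to
`λ^k v ⊗ [((Y - kα₀) f(Y - k) - (Y + kα₁) f(Y)) q(Z - k) + f(Y) Z q(Z - k)]`
`+ ∑_j (k^{j+1}/(j+1)!) λ^k B_j v ⊗ f(Y - k) q(Z - k)`, which does not raise the `Y`-degree.
If `deg f ≤ s + 1`, then `f(Y - k)` has the same `Y^{s+1}`-coefficient `c` as `f`, and its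
`Y^s`-coefficient is smaller by `(s + 1) k c`; so the `Y^{s+1}`-coefficient of the bracket is
`c (Z - k(s + 1 + α₀ + α₁)) q(Z - k)`. Hence taking the `Y^{s+1}`-coefficient maps `V ⊗ W_{s+1}`
onto `V ⊗ ℂ[Z]` (split by `q ↦ Y^{s+1} q(Z)`), with kernel `V ⊗ W_s`, and intertwines `L_k` with
the operators of `M(V, Ω(λ, s + 1 + α₀ + α₁))`.
-/

open TensorProduct

/-- Substitution `X_i ↦ X_i - k` (in the variable `i` only) on `ℂ[X_0,…,X_{N-1}]`. -/
noncomputable def shiftVar {N : ℕ} (i : Fin N) (k : ℂ) :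
    MvPolynomial (Fin N) ℂ →ₗ[ℂ] MvPolynomial (Fin N) ℂ :=
  (MvPolynomial.aeval fun j =>
    MvPolynomial.X j - if j = i then MvPolynomial.C k else 0).toLinearMap

/-- The operator `L_k` on `⊗_i Ω(λ_i,α_i) = ℂ[X_0,…,X_{N-1}]`. -/
noncomputable def omegaOp {N : ℕ} (lam al : Fin N → ℂ) (k : ℤ) :
    MvPolynomial (Fin N) ℂ →ₗ[ℂ] MvPolynomial (Fin N) ℂ :=
  ∑ i : Fin N, (lam i ^ k) •
    ((LinearMap.mulLeft ℂ (MvPolynomial.X i - MvPolynomial.C ((k : ℂ) * al i))).comp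
      (shiftVar i (k : ℂ)))

/-- The operator `L_k` on `M(V,Ω(λ_0,α_0)) ⊗ ⊗_{i=1}^m Ω(λ_i,α_i) = V ⊗ ℂ[X_0,…,X_m]`. -/
noncomputable def MOp {V : Type*} [AddCommGroup V] [Module ℂ V]
    (B : ℕ → V →ₗ[ℂ] V) (r : ℕ) {m : ℕ} (lam al : Fin (m + 1) → ℂ) (k : ℤ) :
    V ⊗[ℂ] MvPolynomial (Fin (m + 1)) ℂ →ₗ[ℂ] V ⊗[ℂ] MvPolynomial (Fin (m + 1)) ℂ :=
  TensorProduct.map LinearMap.id (omegaOp lam al k) +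
  ∑ j ∈ Finset.range (r + 1),
    (((k : ℂ) ^ (j + 1)) / ((j + 1).factorial : ℂ)) •
      TensorProduct.map (B j) ((lam 0 ^ k) • shiftVar 0 (k : ℂ))

/-- Substitution `X ↦ X - k` on `ℂ[X]`. -/
noncomputable def shiftP (k : ℂ) : Polynomial ℂ →ₗ[ℂ] Polynomial ℂ :=
  (Polynomial.aeval (Polynomial.X - Polynomial.C k)).toLinearMap

/-- The operator `L_k` on `Ω(λ,α) = ℂ[X]`. -/
noncomputable def omegaL (lam al : ℂ) (k : ℤ) : Polynomial ℂ →ₗ[ℂ] Polynomial ℂ :=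
  (lam ^ k) •
    ((LinearMap.mulLeft ℂ (Polynomial.X - Polynomial.C ((k : ℂ) * al))).comp (shiftP (k : ℂ)))

/-- The operator `L_k` on the Virasoro module `M(V,Ω(λ,α)) = V ⊗ ℂ[X]`. -/
noncomputable def M1Op {V : Type*} [AddCommGroup V] [Module ℂ V]
    (B : ℕ → V →ₗ[ℂ] V) (r : ℕ) (lam al : ℂ) (k : ℤ) :
    V ⊗[ℂ] Polynomial ℂ →ₗ[ℂ] V ⊗[ℂ] Polynomial ℂ :=
  TensorProduct.map LinearMap.id (omegaL lam al k) +
  ∑ j ∈ Finset.range (r + 1),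
    (((k : ℂ) ^ (j + 1)) / ((j + 1).factorial : ℂ)) •
      TensorProduct.map (B j) ((lam ^ k) • shiftP (k : ℂ))

/-- The subspace `W_s ⊆ ℂ[X_0,X_1]` spanned by
`{ f(X_0)(X_0+X_1)^n : n ∈ ℤ_{≥0}, deg f ≤ s }`. -/
noncomputable def Wsub (s : ℕ) : Submodule ℂ (MvPolynomial (Fin 2) ℂ) :=
  Submodule.span ℂ {p | ∃ (n : ℕ) (f : Polynomial ℂ), f.natDegree ≤ s ∧
    p = (Polynomial.aeval (MvPolynomial.X 0 : MvPolynomial (Fin 2) ℂ) f) *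
        (MvPolynomial.X 0 + MvPolynomial.X 1) ^ n}

/-- The subspace `V ⊗ Q` of `V ⊗ ℂ[X_0,X_1]` for a subspace `Q ⊆ ℂ[X_0,X_1]`. -/
noncomputable def tsub (V : Type*) [AddCommGroup V] [Module ℂ V]
    (Q : Submodule ℂ (MvPolynomial (Fin 2) ℂ)) :
    Submodule ℂ (V ⊗[ℂ] MvPolynomial (Fin 2) ℂ) :=
  Submodule.span ℂ {x | ∃ (v : V) (w : MvPolynomial (Fin 2) ℂ), w ∈ Q ∧ x = v ⊗ₜ[ℂ] w}

open Polynomial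

namespace Polynomial

variable {R : Type*} [CommSemiring R] (r : R) {f : R[X]} {n : ℕ}

theorem coeff_taylor_of_natDegree_le (h : f.natDegree ≤ n) :
    (taylor r f).coeff n = f.coeff n := by
  have h0 : (hasseDeriv n f).natDegree ≤ 0 := (natDegree_hasseDeriv_le f n).trans (by omega)
  rw [taylor_coeff, eq_C_of_natDegree_le_zero h0, eval_C, hasseDeriv_coeff, zero_add,
    Nat.choose_self, Nat.cast_one, one_mul]

theorem coeff_taylor_of_natDegree_le_succ (h : f.natDegree ≤ n + 1) :
    (taylor r f).coeff n = f.coeff n + (n + 1) * r * f.coeff (n + 1) := by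
  have h1 : (hasseDeriv n f).natDegree ≤ 1 := (natDegree_hasseDeriv_le f n).trans (by omega)
  rw [taylor_coeff, eq_X_add_C_of_natDegree_le_one h1]
  simp only [eval_add, eval_mul, eval_C, eval_X, hasseDeriv_coeff, zero_add, Nat.choose_self,
    add_comm 1 n, Nat.choose_succ_self_right]
  push_cast
  ring

end Polynomial

theorem shiftP_eq_taylor (k : ℂ) (f : ℂ[X]) : shiftP k f = taylor (-k) f := by
  rw [shiftP, taylor_apply, comp_eq_aeval, AlgHom.toLinearMap_apply, map_neg, sub_eq_add_neg]

noncomputable def omegaYFactor (k a₀ a₁ : ℂ) (f : ℂ[X]) : ℂ[X] :=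
  (X - C (k * a₀)) * shiftP k f - (X + C (k * a₁)) * f

theorem natDegree_omegaYFactor_le (k a₀ a₁ : ℂ) {s : ℕ} {f : ℂ[X]} (hf : f.natDegree ≤ s) :
    (omegaYFactor k a₀ a₁ f).natDegree ≤ s := by
  rw [natDegree_le_iff_coeff_eq_zero]
  rintro (_ | n) hn
  · omega
  have hf' : f.natDegree ≤ n := by omega
  simp only [omegaYFactor, shiftP_eq_taylor, sub_mul, add_mul, coeff_sub, coeff_add, coeff_X_mul,
    coeff_C_mul, coeff_taylor_of_natDegree_le _ hf',
    coeff_taylor_of_natDegree_le _ (hf'.trans n.le_succ),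
    coeff_eq_zero_of_natDegree_lt (Nat.lt_succ_of_le hf')]
  ring

theorem coeff_omegaYFactor (k a₀ a₁ : ℂ) {s : ℕ} {f : ℂ[X]} (hf : f.natDegree ≤ s + 1) :
    (omegaYFactor k a₀ a₁ f).coeff (s + 1) = -(((s + 1) + a₀ + a₁) * k) * f.coeff (s + 1) := by
  simp only [omegaYFactor, shiftP_eq_taylor, sub_mul, add_mul, coeff_sub, coeff_add, coeff_X_mul,
    coeff_C_mul, coeff_taylor_of_natDegree_le _ hf, coeff_taylor_of_natDegree_le_succ _ hf]
  ring

noncomputable def ofX₀ : ℂ[X] →ₐ[ℂ] MvPolynomial (Fin 2) ℂ :=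
  aeval (MvPolynomial.X 0)

noncomputable def ofSum : ℂ[X] →ₐ[ℂ] MvPolynomial (Fin 2) ℂ :=
  aeval (MvPolynomial.X 0 + MvPolynomial.X 1)

/-- The coordinates `Y = X₀` (outer variable) and `Z = X₀ + X₁` (inner variable). -/
noncomputable def toYZ : MvPolynomial (Fin 2) ℂ →ₐ[ℂ] ℂ[X][X] :=
  MvPolynomial.aeval ![X, C X - X]

noncomputable def coeffY (n : ℕ) : MvPolynomial (Fin 2) ℂ →ₗ[ℂ] ℂ[X] :=
  (lcoeff ℂ[X] n).restrictScalars ℂ ∘ₗ toYZ.toLinearMap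

noncomputable def monomialY (n : ℕ) : ℂ[X] →ₗ[ℂ] MvPolynomial (Fin 2) ℂ :=
  LinearMap.mulLeft ℂ (ofX₀ (X ^ n)) ∘ₗ ofSum.toLinearMap

theorem monomialY_apply (n : ℕ) (q : ℂ[X]) : monomialY n q = ofX₀ (X ^ n) * ofSum q := rfl

theorem toYZ_ofX₀ (f : ℂ[X]) : toYZ (ofX₀ f) = f.map (algebraMap ℂ ℂ[X]) := by
  rw [ofX₀, ← aeval_algHom_apply, ← aeval_X_left_eq_map]
  simp [toYZ]

theorem toYZ_ofSum (q : ℂ[X]) : toYZ (ofSum q) = C q := by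
  have hZ : toYZ (MvPolynomial.X 0 + MvPolynomial.X 1) = algebraMap ℂ[X] ℂ[X][X] X := by
    simp [toYZ]
  rw [ofSum, ← aeval_algHom_apply, hZ, aeval_algebraMap_apply, aeval_X_left_apply, algebraMap_eq]

theorem coeffY_ofX₀_mul_ofSum (n : ℕ) (f q : ℂ[X]) :
    coeffY n (ofX₀ f * ofSum q) = f.coeff n • q := by
  simp [coeffY, toYZ_ofX₀, toYZ_ofSum, coeff_mul_C, smul_eq_C_mul, mul_comm]

theorem coeffY_monomialY (n : ℕ) (q : ℂ[X]) : coeffY n (monomialY n q) = q := by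
  rw [monomialY_apply, coeffY_ofX₀_mul_ofSum, coeff_X_pow_self, one_smul]

theorem shiftVar_zero_ofX₀_mul_ofSum (k : ℂ) (f q : ℂ[X]) :
    shiftVar 0 k (ofX₀ f * ofSum q) = ofX₀ (shiftP k f) * ofSum (shiftP k q) := by
  simp only [shiftVar, shiftP, ofX₀, ofSum, AlgHom.toLinearMap_apply, map_mul,
    ← aeval_algHom_apply]
  congr 2 <;> simp [sub_add_eq_add_sub, add_sub_assoc]

theorem shiftVar_one_ofX₀_mul_ofSum (k : ℂ) (f q : ℂ[X]) :
    shiftVar 1 k (ofX₀ f * ofSum q) = ofX₀ f * ofSum (shiftP k q) := by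
  simp only [shiftVar, shiftP, ofX₀, ofSum, AlgHom.toLinearMap_apply, map_mul,
    ← aeval_algHom_apply]
  congr 2 <;> simp [add_sub_assoc]

theorem omegaOp_ofX₀_mul_ofSum (lam a₀ a₁ : ℂ) (k : ℤ) (f q : ℂ[X]) :
    omegaOp (fun _ => lam) ![a₀, a₁] k (ofX₀ f * ofSum q) =
      lam ^ k • (ofX₀ (omegaYFactor k a₀ a₁ f) * ofSum (shiftP k q) +
        ofX₀ f * ofSum (X * shiftP k q)) := by
  rw [omegaOp, Fin.sum_univ_two]
  simp only [LinearMap.add_apply, LinearMap.smul_apply, LinearMap.comp_apply,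
    LinearMap.mulLeft_apply, Matrix.cons_val_zero, Matrix.cons_val_one,
    shiftVar_zero_ofX₀_mul_ofSum, shiftVar_one_ofX₀_mul_ofSum, ← smul_add, omegaYFactor]
  simp only [map_sub, map_mul, map_add, ofX₀, ofSum, aeval_X, aeval_C,
    MvPolynomial.algebraMap_eq]
  congr 1
  ring

theorem ofX₀_mul_ofSum_mem_Wsub {s : ℕ} {f : ℂ[X]} (hf : f.natDegree ≤ s) (q : ℂ[X]) :
    ofX₀ f * ofSum q ∈ Wsub s := by
  induction q using Polynomial.induction_on' with
  | add p q hp hq => rw [map_add, mul_add]; exact add_mem hp hq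
  | monomial n a =>
    rw [← C_mul_X_pow_eq_monomial, ← smul_eq_C_mul, map_smul, mul_smul_comm]
    exact Submodule.smul_mem _ _ (Submodule.subset_span ⟨n, f, hf, by simp [ofX₀, ofSum]⟩)

theorem Wsub_le {s : ℕ} {P : Submodule ℂ (MvPolynomial (Fin 2) ℂ)}
    (h : ∀ f q : ℂ[X], f.natDegree ≤ s → ofX₀ f * ofSum q ∈ P) : Wsub s ≤ P := by
  rw [Wsub, Submodule.span_le]
  rintro p ⟨n, f, hf, rfl⟩
  simpa [ofX₀, ofSum] using h f (X ^ n) hf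

theorem Wsub_mono : Monotone Wsub := fun _ _ hst =>
  Wsub_le fun _ q hf => ofX₀_mul_ofSum_mem_Wsub (hf.trans hst) q

theorem Wsub_le_ker_coeffY {s n : ℕ} (h : s < n) : Wsub s ≤ LinearMap.ker (coeffY n) :=
  Wsub_le fun f q hf => by
    rw [LinearMap.mem_ker, coeffY_ofX₀_mul_ofSum, coeff_eq_zero_of_natDegree_lt (by omega),
      zero_smul]

theorem shiftVar_zero_mem_Wsub (k : ℂ) {s : ℕ} {p : MvPolynomial (Fin 2) ℂ} (hp : p ∈ Wsub s) :
    shiftVar 0 k p ∈ Wsub s :=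
  (Wsub_le (P := (Wsub s).comap (shiftVar 0 k)) fun f q hf => by
    rw [Submodule.mem_comap, shiftVar_zero_ofX₀_mul_ofSum, shiftP_eq_taylor]
    exact ofX₀_mul_ofSum_mem_Wsub ((natDegree_taylor f _).trans_le hf) _) hp

theorem omegaOp_mem_Wsub (lam a₀ a₁ : ℂ) (k : ℤ) {s : ℕ} {p : MvPolynomial (Fin 2) ℂ}
    (hp : p ∈ Wsub s) : omegaOp (fun _ => lam) ![a₀, a₁] k p ∈ Wsub s :=
  (Wsub_le (P := (Wsub s).comap (omegaOp (fun _ => lam) ![a₀, a₁] k)) fun f q hf => by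
    rw [Submodule.mem_comap, omegaOp_ofX₀_mul_ofSum]
    exact Submodule.smul_mem _ _ (add_mem
      (ofX₀_mul_ofSum_mem_Wsub (natDegree_omegaYFactor_le _ _ _ hf) _)
      (ofX₀_mul_ofSum_mem_Wsub hf _))) hp

theorem Wsub_succ_le_comap_sub_monomialY_coeffY (s : ℕ) :
    Wsub (s + 1) ≤ (Wsub s).comap (LinearMap.id - monomialY (s + 1) ∘ₗ coeffY (s + 1)) :=
  Wsub_le fun f q hf => by
    have hlow : (f - C (f.coeff (s + 1)) * X ^ (s + 1)).natDegree ≤ s := by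
      rw [natDegree_le_iff_coeff_eq_zero]
      intro m hm
      rw [coeff_sub, coeff_C_mul_X_pow]
      split_ifs with hm'
      · rw [hm', sub_self]
      · rw [coeff_eq_zero_of_natDegree_lt (by omega), sub_zero]
    rw [Submodule.mem_comap, LinearMap.sub_apply, LinearMap.comp_apply, LinearMap.id_apply,
      coeffY_ofX₀_mul_ofSum, map_smul, monomialY_apply]
    convert ofX₀_mul_ofSum_mem_Wsub hlow q using 1
    rw [map_sub, map_mul, sub_mul, ← algebraMap_eq, AlgHom.commutes, Algebra.smul_def, mul_assoc]

theorem coeffY_shiftVar_zero (k : ℂ) {s : ℕ} {p : MvPolynomial (Fin 2) ℂ}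
    (hp : p ∈ Wsub (s + 1)) :
    coeffY (s + 1) (shiftVar 0 k p) = shiftP k (coeffY (s + 1) p) :=
  (Wsub_le (P := LinearMap.eqLocus (coeffY (s + 1) ∘ₗ shiftVar 0 k) (shiftP k ∘ₗ coeffY (s + 1)))
    fun f q hf => by
      simp only [LinearMap.mem_eqLocus, LinearMap.comp_apply, shiftVar_zero_ofX₀_mul_ofSum,
        coeffY_ofX₀_mul_ofSum, map_smul, shiftP_eq_taylor, coeff_taylor_of_natDegree_le _ hf]) hp

theorem coeffY_omegaOp (lam a₀ a₁ : ℂ) (k : ℤ) {s : ℕ} {p : MvPolynomial (Fin 2) ℂ}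
    (hp : p ∈ Wsub (s + 1)) :
    coeffY (s + 1) (omegaOp (fun _ => lam) ![a₀, a₁] k p) =
      omegaL lam ((s + 1) + a₀ + a₁) k (coeffY (s + 1) p) :=
  (Wsub_le (P := LinearMap.eqLocus (coeffY (s + 1) ∘ₗ omegaOp (fun _ => lam) ![a₀, a₁] k)
      (omegaL lam ((s + 1) + a₀ + a₁) k ∘ₗ coeffY (s + 1)))
    fun f q hf => by
      simp only [LinearMap.mem_eqLocus, LinearMap.comp_apply, omegaOp_ofX₀_mul_ofSum, map_smul,
        map_add, coeffY_ofX₀_mul_ofSum, coeff_omegaYFactor _ _ _ hf, omegaL, LinearMap.smul_apply,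
        LinearMap.mulLeft_apply]
      rw [sub_mul, ← smul_eq_C_mul]
      module) hp

section tsub

variable {V : Type*} [AddCommGroup V] [Module ℂ V]

theorem tmul_mem_tsub {Q : Submodule ℂ (MvPolynomial (Fin 2) ℂ)} (v : V)
    {w : MvPolynomial (Fin 2) ℂ} (hw : w ∈ Q) : v ⊗ₜ[ℂ] w ∈ tsub V Q :=
  Submodule.subset_span ⟨v, w, hw, rfl⟩

theorem tsub_le {Q : Submodule ℂ (MvPolynomial (Fin 2) ℂ)}
    {P : Submodule ℂ (V ⊗[ℂ] MvPolynomial (Fin 2) ℂ)}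
    (h : ∀ (v : V) w, w ∈ Q → v ⊗ₜ[ℂ] w ∈ P) : tsub V Q ≤ P := by
  rw [tsub, Submodule.span_le]
  rintro x ⟨v, w, hw, rfl⟩
  exact h v w hw

theorem tsub_mono {Q Q' : Submodule ℂ (MvPolynomial (Fin 2) ℂ)} (h : Q ≤ Q') :
    tsub V Q ≤ tsub V Q' :=
  tsub_le fun v _ hw => tmul_mem_tsub v (h hw)

theorem map_mem_tsub {Q Q' : Submodule ℂ (MvPolynomial (Fin 2) ℂ)} (A : V →ₗ[ℂ] V)
    {g : MvPolynomial (Fin 2) ℂ →ₗ[ℂ] MvPolynomial (Fin 2) ℂ} (hg : ∀ w ∈ Q, g w ∈ Q')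
    {x : V ⊗[ℂ] MvPolynomial (Fin 2) ℂ} (hx : x ∈ tsub V Q) : map A g x ∈ tsub V Q' :=
  tsub_le (P := (tsub V Q').comap (map A g))
    (fun v w hw => by rw [Submodule.mem_comap, map_tmul]; exact tmul_mem_tsub _ (hg w hw)) hx

theorem MOp_apply (B : ℕ → V →ₗ[ℂ] V) (r : ℕ) {m : ℕ} (lam al : Fin (m + 1) → ℂ) (k : ℤ)
    (x : V ⊗[ℂ] MvPolynomial (Fin (m + 1)) ℂ) :
    MOp B r lam al k x = map LinearMap.id (omegaOp lam al k) x +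
      ∑ j ∈ Finset.range (r + 1), ((k : ℂ) ^ (j + 1) / ((j + 1).factorial : ℂ)) •
        map (B j) (lam 0 ^ k • shiftVar 0 (k : ℂ)) x := by
  simp only [MOp, LinearMap.add_apply, LinearMap.sum_apply, LinearMap.smul_apply]

theorem MOp_mem_tsub_Wsub (B : ℕ → V →ₗ[ℂ] V) (r : ℕ) (lam a₀ a₁ : ℂ) (k : ℤ) {s : ℕ}
    {x : V ⊗[ℂ] MvPolynomial (Fin 2) ℂ} (hx : x ∈ tsub V (Wsub s)) :
    MOp B r (fun _ => lam) ![a₀, a₁] k x ∈ tsub V (Wsub s) := by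
  rw [MOp_apply]
  refine add_mem (map_mem_tsub _ (fun w hw => omegaOp_mem_Wsub lam a₀ a₁ k hw) hx)
    (Submodule.sum_mem _ fun j _ => Submodule.smul_mem _ _ (map_mem_tsub _ (fun w hw => ?_) hx))
  exact Submodule.smul_mem _ _ (shiftVar_zero_mem_Wsub _ hw)

theorem tsub_Wsub_le_ker_map_coeffY {s n : ℕ} (h : s < n) :
    tsub V (Wsub s) ≤ LinearMap.ker (map LinearMap.id (coeffY n)) :=
  tsub_le fun v w hw => by
    rw [LinearMap.mem_ker, map_tmul, LinearMap.mem_ker.mp (Wsub_le_ker_coeffY h hw), tmul_zero]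

theorem map_coeffY_map_monomialY (n : ℕ) (y : V ⊗[ℂ] ℂ[X]) :
    map LinearMap.id (coeffY n) (map LinearMap.id (monomialY n) y) = y := by
  have hid : coeffY n ∘ₗ monomialY n = LinearMap.id := LinearMap.ext (coeffY_monomialY n)
  rw [← LinearMap.comp_apply, ← TensorProduct.map_comp, LinearMap.id_comp, hid,
    TensorProduct.map_id, LinearMap.id_apply]

theorem map_monomialY_mem_tsub_Wsub (n : ℕ) (y : V ⊗[ℂ] ℂ[X]) :
    map LinearMap.id (monomialY n) y ∈ tsub V (Wsub n) := by
  induction y using TensorProduct.induction_on with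
  | zero => rw [map_zero]; exact zero_mem _
  | tmul v q =>
    rw [map_tmul, LinearMap.id_apply, monomialY_apply]
    exact tmul_mem_tsub v (ofX₀_mul_ofSum_mem_Wsub (natDegree_X_pow_le n) q)
  | add y z hy hz => rw [map_add]; exact add_mem hy hz

theorem mem_tsub_Wsub_of_map_coeffY_eq_zero {s : ℕ} {x : V ⊗[ℂ] MvPolynomial (Fin 2) ℂ}
    (hx : x ∈ tsub V (Wsub (s + 1))) (h : map LinearMap.id (coeffY (s + 1)) x = 0) :
    x ∈ tsub V (Wsub s) := by
  have hsub := tsub_le (P := (tsub V (Wsub s)).comap (LinearMap.id -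
      map LinearMap.id (monomialY (s + 1)) ∘ₗ map LinearMap.id (coeffY (s + 1))))
    (fun v w hw => by
      simpa [← tmul_sub] using
        tmul_mem_tsub v (Submodule.mem_comap.mp (Wsub_succ_le_comap_sub_monomialY_coeffY s hw)))
    hx
  simpa [h] using hsub

theorem map_coeffY_MOp (B : ℕ → V →ₗ[ℂ] V) (r : ℕ) (lam a₀ a₁ : ℂ) (k : ℤ) {s : ℕ}
    {x : V ⊗[ℂ] MvPolynomial (Fin 2) ℂ} (hx : x ∈ tsub V (Wsub (s + 1))) :
    map LinearMap.id (coeffY (s + 1)) (MOp B r (fun _ => lam) ![a₀, a₁] k x) =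
      M1Op B r lam ((s + 1) + a₀ + a₁) k (map LinearMap.id (coeffY (s + 1)) x) := by
  refine tsub_le (P := LinearMap.eqLocus
    (map LinearMap.id (coeffY (s + 1)) ∘ₗ MOp B r (fun _ => lam) ![a₀, a₁] k)
    (M1Op B r lam ((s + 1) + a₀ + a₁) k ∘ₗ map LinearMap.id (coeffY (s + 1))))
    (fun v w hw => ?_) hx
  simp [MOp, M1Op, map_tmul, coeffY_omegaOp _ _ _ _ hw, coeffY_shiftVar_zero _ hw]

theorem tmul_one_ne_zero {v : V} (hv : v ≠ 0) : v ⊗ₜ[ℂ] (1 : ℂ[X]) ≠ 0 := by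
  intro h
  apply hv
  simpa using congrArg ((TensorProduct.rid ℂ V).toLinearMap ∘ₗ map LinearMap.id (lcoeff ℂ 0)) h

theorem tsub_Wsub_lt_succ [Nontrivial V] (s : ℕ) : tsub V (Wsub s) < tsub V (Wsub (s + 1)) := by
  obtain ⟨v, hv⟩ := exists_ne (0 : V)
  refine lt_of_le_of_ne (tsub_mono (Wsub_mono s.le_succ)) fun heq => tmul_one_ne_zero hv ?_
  have hmem := map_monomialY_mem_tsub_Wsub (s + 1) (v ⊗ₜ[ℂ] (1 : ℂ[X]))
  rw [← heq] at hmem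
  rw [← map_coeffY_map_monomialY (s + 1) (v ⊗ₜ[ℂ] (1 : ℂ[X]))]
  exact tsub_Wsub_le_ker_map_coeffY s.lt_succ_self hmem

end tsub

theorem statement5_general {V : Type*} [AddCommGroup V] [Module ℂ V]
    (r : ℕ) (al0 : ℂ) (lam0 al1 : ℂ)
    (B : ℕ → V →ₗ[ℂ] V)
    (hVinf : ¬ Module.Finite ℂ V) :
    (∀ s : ℕ, ∀ k : ℤ, ∀ x ∈ tsub V (Wsub s),
        MOp B r (fun _ => lam0) ![al0, al1] k x ∈ tsub V (Wsub s)) ∧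
    (∀ s : ℕ, tsub V (Wsub s) < tsub V (Wsub (s + 1))) ∧
    (∀ s : ℕ,
      ∃ ψ : ↥(tsub V (Wsub (s + 1))) →ₗ[ℂ] (V ⊗[ℂ] Polynomial ℂ),
        Function.Surjective ψ ∧
        LinearMap.ker ψ = (tsub V (Wsub s)).comap (tsub V (Wsub (s + 1))).subtype ∧
        ∀ (k : ℤ) (x : V ⊗[ℂ] MvPolynomial (Fin 2) ℂ)
          (hx : x ∈ tsub V (Wsub (s + 1)))
          (hLx : MOp B r (fun _ => lam0) ![al0, al1] k x ∈ tsub V (Wsub (s + 1))),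
          ψ ⟨MOp B r (fun _ => lam0) ![al0, al1] k x, hLx⟩ =
            M1Op B r lam0 (((s : ℂ) + 1) + al0 + al1) k (ψ ⟨x, hx⟩)) := by
  have : Nontrivial V := not_subsingleton_iff_nontrivial.mp fun _ => hVinf inferInstance
  refine ⟨fun s k x hx => MOp_mem_tsub_Wsub B r lam0 al0 al1 k hx, tsub_Wsub_lt_succ,
    fun s => ⟨map LinearMap.id (coeffY (s + 1)) ∘ₗ (tsub V (Wsub (s + 1))).subtype,
      fun y => ⟨⟨_, map_monomialY_mem_tsub_Wsub (s + 1) y⟩, map_coeffY_map_monomialY (s + 1) y⟩,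
      ?_, fun k x hx _ => map_coeffY_MOp B r lam0 al0 al1 k hx⟩⟩
  ext x
  simp only [LinearMap.mem_ker, LinearMap.comp_apply, Submodule.subtype_apply,
    Submodule.mem_comap]
  exact ⟨mem_tsub_Wsub_of_map_coeffY_eq_zero x.2, (tsub_Wsub_le_ker_map_coeffY s.lt_succ_self ·)⟩

/-- **Corollary 3.4.** Let `r ∈ ℤ_{≥0}`, `α_0 ∈ ℂ`, `λ_0, α_1 ∈ ℂ*`, and `V` an
infinite-dimensional irreducible `L̄_r`-module. Then
`V ⊗ W_0 ⊂ V ⊗ W_1 ⊂ ⋯` is a chain of submodules of `M(V,Ω(λ_0,α_0)) ⊗ Ω(λ_0,α_1)`,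
and for each `s ≥ 1` (written here as `s + 1` with `s ∈ ℤ_{≥0}`) the quotient
`(V ⊗ W_{s+1})/(V ⊗ W_s)` is isomorphic to `M(V,Ω(λ_0, (s+1)+α_0+α_1))`.
The quotient isomorphism is expressed, via the first isomorphism theorem, as a
surjective linear map `ψ : V ⊗ W_{s+1} → M(V,Ω(λ_0,(s+1)+α_0+α_1))` whose kernel is
exactly `V ⊗ W_s` and which intertwines the operators `L_k`. -/
theorem statement5 {V : Type*} [AddCommGroup V] [Module ℂ V]
    (r : ℕ) (al0 : ℂ) (lam0 al1 : ℂ) (hlam0 : lam0 ≠ 0) (hal1 : al1 ≠ 0)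
    (B : ℕ → V →ₗ[ℂ] V)
    (hBtop : ∀ i, r < i → B i = 0)
    (hBrel : ∀ i j, i ≤ r → j ≤ r →
      B i ∘ₗ B j - B j ∘ₗ B i = (((j : ℂ) - (i : ℂ)) • B (i + j) : V →ₗ[ℂ] V))
    (hVirr : ∀ U : Submodule ℂ V, (∀ i, i ≤ r → ∀ w ∈ U, B i w ∈ U) → U = ⊥ ∨ U = ⊤)
    (hVinf : ¬ Module.Finite ℂ V) :
    (∀ s : ℕ, ∀ k : ℤ, ∀ x ∈ tsub V (Wsub s),
        MOp B r (fun _ => lam0) ![al0, al1] k x ∈ tsub V (Wsub s)) ∧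
    (∀ s : ℕ, tsub V (Wsub s) < tsub V (Wsub (s + 1))) ∧
    (∀ s : ℕ,
      ∃ ψ : ↥(tsub V (Wsub (s + 1))) →ₗ[ℂ] (V ⊗[ℂ] Polynomial ℂ),
        Function.Surjective ψ ∧
        LinearMap.ker ψ = (tsub V (Wsub s)).comap (tsub V (Wsub (s + 1))).subtype ∧
        ∀ (k : ℤ) (x : V ⊗[ℂ] MvPolynomial (Fin 2) ℂ)
          (hx : x ∈ tsub V (Wsub (s + 1)))
          (hLx : MOp B r (fun _ => lam0) ![al0, al1] k x ∈ tsub V (Wsub (s + 1))),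
          ψ ⟨MOp B r (fun _ => lam0) ![al0, al1] k x, hLx⟩ =
            M1Op B r lam0 (((s : ℂ) + 1) + al0 + al1) k (ψ ⟨x, hx⟩)) :=
  statement5_general r al0 lam0 al1 B hVinf
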